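/- arXiv:1510.03285 — 3 statements merged into one kernel-verified Lean document; each statement's English description precedes it below -/
import Mathlib

section
/- Let a < b be real numbers, let f : ℝ → ℝ be continuously differentiable on [a,b], and let α₀ ∈ (0,1). If D^α_{*a} f(t) ≤ 0 for all t ∈ [a,b] and all α ∈ (α₀, 1), then f is monotone decreasing on [a,b]. -/
/-- The Caputo fractional derivative of order `α` with starting point `a`:
`D^α_{*a} f(t) = (1/Γ(1-α)) ∫_a^t (t-s)^(-α) f'(s) ds`. -/
noncomputable def caputoDeriv (a α : ℝ) (f : ℝ → ℝ) (t : ℝ) : ℝ :=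
  (Real.Gamma (1 - α))⁻¹ * ∫ s in a..t, (t - s) ^ (-α) * deriv f s

/-!
As `α → 1⁻`, the Caputo derivative `D^α_{*a} f(t)` is the Riemann–Liouville integral of order
`1 - α → 0⁺` of `f'`, and these integrals converge to `f'(t)`: the kernel
`(t - s)^(β - 1) / Γ(β)` has total mass `(t - a)^β / Γ(β + 1) → 1` on `[a, t]`, while its mass
on `[a, t - δ]` tends to `0` for every `δ > 0`. Hence `f'(t) ≤ 0` at every interior point `t`,
and `f` is antitone.
-/

open Set Filter Topology MeasureTheory

noncomputable def riemannLiouvilleIntegral (a β : ℝ) (g : ℝ → ℝ) (t : ℝ) : ℝ :=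
  (Real.Gamma β)⁻¹ * ∫ s in a..t, (t - s) ^ (β - 1) * g s

section Kernel

variable {β : ℝ} (t : ℝ)

lemma integral_sub_rpow_sub_one (hβ : 0 < β) (c d : ℝ) :
    ∫ s in c..d, (t - s) ^ (β - 1) = ((t - c) ^ β - (t - d) ^ β) / β := by
  rw [intervalIntegral.integral_comp_sub_left (fun u : ℝ => u ^ (β - 1)) t,
    integral_rpow (Or.inl (by linarith)), sub_add_cancel]

lemma intervalIntegrable_sub_rpow_sub_one (hβ : 0 < β) (c d : ℝ) :
    IntervalIntegrable (fun s : ℝ => (t - s) ^ (β - 1)) volume c d := by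
  simpa using (intervalIntegral.intervalIntegrable_rpow' (a := t - c) (b := t - d)
    (by linarith : (-1 : ℝ) < β - 1)).comp_sub_left t

lemma Gamma_inv_mul_integral_sub_rpow_sub_one (hβ : 0 < β) (c d : ℝ) :
    (Real.Gamma β)⁻¹ * ∫ s in c..d, (t - s) ^ (β - 1)
      = (t - c) ^ β / Real.Gamma (β + 1) - (t - d) ^ β / Real.Gamma (β + 1) := by
  have hΓ := (Real.Gamma_pos_of_pos hβ).ne'
  rw [integral_sub_rpow_sub_one t hβ, Real.Gamma_add_one hβ.ne']
  field_simp

lemma abs_Gamma_inv_mul_integral_le {h : ℝ → ℝ} {c d C : ℝ} (hβ : 0 < β) (hcd : c ≤ d)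
    (hdt : d ≤ t) (hC : ∀ s ∈ Ioc c d, |h s| ≤ C) :
    |(Real.Gamma β)⁻¹ * ∫ s in c..d, (t - s) ^ (β - 1) * h s|
      ≤ C * ((t - c) ^ β / Real.Gamma (β + 1) - (t - d) ^ β / Real.Gamma (β + 1)) := by
  have hΓ := inv_nonneg.2 (Real.Gamma_pos_of_pos hβ).le
  rw [← Gamma_inv_mul_integral_sub_rpow_sub_one t hβ, abs_mul, abs_of_nonneg hΓ,
    mul_left_comm, ← intervalIntegral.integral_const_mul C]
  refine mul_le_mul_of_nonneg_left ?_ hΓ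
  rw [← Real.norm_eq_abs]
  refine intervalIntegral.norm_integral_le_of_norm_le hcd (ae_of_all _ fun s hs => ?_)
    ((intervalIntegrable_sub_rpow_sub_one t hβ c d).const_mul C)
  have hk : 0 ≤ (t - s) ^ (β - 1) := Real.rpow_nonneg (by linarith [hs.2]) _
  rw [Real.norm_eq_abs, abs_mul, abs_of_nonneg hk, mul_comm C]
  exact mul_le_mul_of_nonneg_left (hC s hs) hk

end Kernel

lemma tendsto_rpow_div_Gamma_add_one {x : ℝ} (hx : 0 < x) :
    Tendsto (fun β => x ^ β / Real.Gamma (β + 1)) (𝓝 0) (𝓝 1) := by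
  have hΓ : ContinuousAt (fun β : ℝ => Real.Gamma (β + 1)) 0 :=
    (Real.differentiableAt_Gamma fun m => by
      rw [zero_add]; exact ((neg_nonpos.2 m.cast_nonneg).trans_lt one_pos).ne').continuousAt.comp
      (continuousAt_id.add continuousAt_const)
  have hcont : ContinuousAt (fun β => x ^ β / Real.Gamma (β + 1)) 0 :=
    (continuousAt_const.rpow continuousAt_id (Or.inl hx.ne')).div hΓ (by simp)
  simpa using hcont.tendsto

section Limit

variable {a t : ℝ}

lemma exists_forall_Icc_abs_sub_le_of_continuousWithinAt {h : ℝ → ℝ} (hat : a < t)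
    (hh : ContinuousWithinAt h (Icc a t) t) {ε : ℝ} (hε : 0 < ε) :
    ∃ δ > 0, δ < t - a ∧ ∀ s ∈ Icc (t - δ) t, |h s - h t| ≤ ε := by
  obtain ⟨r, hr, hrh⟩ := Metric.continuousWithinAt_iff.1 hh ε hε
  have hδr : min (r / 2) ((t - a) / 2) ≤ r / 2 := min_le_left _ _
  have hδa : min (r / 2) ((t - a) / 2) ≤ (t - a) / 2 := min_le_right _ _
  refine ⟨min (r / 2) ((t - a) / 2), by positivity, by linarith, fun s hs => ?_⟩
  have hsr : dist s t < r := by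
    rw [Real.dist_eq, abs_sub_lt_iff]
    constructor <;> linarith [hs.1, hs.2]
  exact (hrh ⟨by linarith [hs.1], hs.2⟩ hsr).le

lemma tendsto_riemannLiouvilleIntegral_of_apply_eq_zero {h : ℝ → ℝ} (hat : a < t)
    (hh : ContinuousOn h (Icc a t)) (ht : h t = 0) :
    Tendsto (fun β => riemannLiouvilleIntegral a β h t) (𝓝[>] 0) (𝓝 0) := by
  rw [Metric.tendsto_nhds]
  intro ε hε
  obtain ⟨M, hM⟩ := isCompact_Icc.exists_bound_of_continuousOn hh
  obtain ⟨δ, hδ, hδa, hnear⟩ := exists_forall_Icc_abs_sub_le_of_continuousWithinAt hat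
    (hh t (right_mem_Icc.2 hat.le)) (half_pos hε)
  -- `ρ x β` is the kernel mass of `[t - x, t]`;
  -- `|h| ≤ M` on `[a, t - δ]` and `|h| ≤ ε / 2` on `[t - δ, t]`
  set ρ : ℝ → ℝ → ℝ := fun x β => x ^ β / Real.Gamma (β + 1)
  have hbound : Tendsto (fun β => M * (ρ (t - a) β - ρ δ β) + ε / 2 * ρ δ β) (𝓝 0)
      (𝓝 (M * (1 - 1) + ε / 2 * 1)) :=
    (((tendsto_rpow_div_Gamma_add_one (sub_pos.2 hat)).sub
      (tendsto_rpow_div_Gamma_add_one hδ)).const_mul M).add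
      ((tendsto_rpow_div_Gamma_add_one hδ).const_mul _)
  have hsmall : ∀ᶠ β in 𝓝[>] 0, M * (ρ (t - a) β - ρ δ β) + ε / 2 * ρ δ β < ε :=
    (hbound.mono_left nhdsWithin_le_nhds).eventually (gt_mem_nhds (by linarith))
  filter_upwards [hsmall, self_mem_nhdsWithin] with β hβε (hβ : 0 < β)
  have hint : ∀ c d, c ∈ Icc a t → d ∈ Icc a t →
      IntervalIntegrable (fun s => (t - s) ^ (β - 1) * h s) volume c d := fun c d hc hd =>
    (intervalIntegrable_sub_rpow_sub_one t hβ c d).mul_continuousOn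
      (hh.mono (uIcc_subset_Icc hc hd))
  have hmid : t - δ ∈ Icc a t := ⟨by linarith, by linarith⟩
  have hsplit : riemannLiouvilleIntegral a β h t
      = (Real.Gamma β)⁻¹ * (∫ s in a..t - δ, (t - s) ^ (β - 1) * h s)
        + (Real.Gamma β)⁻¹ * ∫ s in t - δ..t, (t - s) ^ (β - 1) * h s := by
    rw [riemannLiouvilleIntegral, ← mul_add, intervalIntegral.integral_add_adjacent_intervals
      (hint a (t - δ) (left_mem_Icc.2 hat.le) hmid) (hint (t - δ) t hmid (right_mem_Icc.2 hat.le))]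
  have hfar := abs_Gamma_inv_mul_integral_le t (c := a) (d := t - δ) (h := h) (C := M) hβ
    (by linarith) (by linarith) fun s hs => by simpa using hM s ⟨hs.1.le, by linarith [hs.2]⟩
  have hclose := abs_Gamma_inv_mul_integral_le t (c := t - δ) (d := t) (h := h) hβ
    (by linarith) le_rfl fun s hs => by simpa [ht] using hnear s ⟨hs.1.le, hs.2⟩
  rw [sub_sub_cancel] at hfar hclose
  rw [sub_self, Real.zero_rpow hβ.ne', zero_div, sub_zero] at hclose
  rw [Real.dist_eq, sub_zero, hsplit]
  calc _ ≤ _ := abs_add_le _ _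
    _ ≤ _ := add_le_add hfar hclose
    _ < ε := hβε

lemma riemannLiouvilleIntegral_eq_mul_add {β : ℝ} {g : ℝ → ℝ} (hβ : 0 < β)
    (hg : ContinuousOn g (uIcc a t)) :
    riemannLiouvilleIntegral a β g t = g t * ((t - a) ^ β / Real.Gamma (β + 1))
      + riemannLiouvilleIntegral a β (fun s => g s - g t) t := by
  have hk := intervalIntegrable_sub_rpow_sub_one t hβ a t
  have hsplit : ∫ s in a..t, (t - s) ^ (β - 1) * g s
      = g t * (∫ s in a..t, (t - s) ^ (β - 1))
        + ∫ s in a..t, (t - s) ^ (β - 1) * (g s - g t) := by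
    rw [← intervalIntegral.integral_const_mul, ← intervalIntegral.integral_add
      (hk.const_mul _) (hk.mul_continuousOn (g := fun s => g s - g t) (hg.sub continuousOn_const))]
    congr 1 with s
    ring
  rw [riemannLiouvilleIntegral, riemannLiouvilleIntegral, hsplit, mul_add, mul_left_comm,
    Gamma_inv_mul_integral_sub_rpow_sub_one t hβ, sub_self, Real.zero_rpow hβ.ne', zero_div,
    sub_zero]

theorem tendsto_riemannLiouvilleIntegral_nhdsGT_zero {g : ℝ → ℝ} (hat : a < t)
    (hg : ContinuousOn g (Icc a t)) :
    Tendsto (fun β => riemannLiouvilleIntegral a β g t) (𝓝[>] 0) (𝓝 (g t)) := by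
  have hmass := (tendsto_rpow_div_Gamma_add_one (sub_pos.2 hat)).mono_left
    (nhdsWithin_le_nhds (s := Ioi 0))
  have hrest := tendsto_riemannLiouvilleIntegral_of_apply_eq_zero (h := fun s => g s - g t) hat
    (hg.sub continuousOn_const) (sub_self (g t))
  have hsum := (hmass.const_mul (g t)).add hrest
  rw [mul_one, add_zero] at hsum
  refine hsum.congr' ?_
  filter_upwards [self_mem_nhdsWithin] with β (hβ : 0 < β)
  exact (riemannLiouvilleIntegral_eq_mul_add hβ (by rwa [uIcc_of_le hat.le])).symm

end Limit

lemma caputoDeriv_eq_riemannLiouvilleIntegral (a α : ℝ) (f : ℝ → ℝ) (t : ℝ) :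
    caputoDeriv a α f t = riemannLiouvilleIntegral a (1 - α) (deriv f) t := by
  simp only [caputoDeriv, riemannLiouvilleIntegral, sub_sub_cancel_left]

lemma tendsto_one_sub_nhdsLT_one : Tendsto (fun α : ℝ => 1 - α) (𝓝[<] 1) (𝓝[>] 0) := by
  refine tendsto_nhdsWithin_iff.2 ⟨?_, ?_⟩
  · have hcont : Continuous fun α : ℝ => 1 - α := continuous_const.sub continuous_id
    simpa using (hcont.tendsto 1).mono_left (nhdsWithin_le_nhds (s := Iio 1))
  · filter_upwards [self_mem_nhdsWithin] with α (hα : α < 1)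
    exact sub_pos.2 hα

/-- `f` need not be differentiable at `t` itself, so the limit is the left derivative. -/
theorem tendsto_caputoDeriv_nhdsLT_one {a t : ℝ} {f : ℝ → ℝ} (hat : a < t)
    (hf : ContDiffOn ℝ 1 f (Icc a t)) :
    Tendsto (fun α => caputoDeriv a α f t) (𝓝[<] 1) (𝓝 (derivWithin f (Icc a t) t)) := by
  have hcont : ContinuousOn (derivWithin f (Icc a t)) (Icc a t) :=
    hf.continuousOn_derivWithin (uniqueDiffOn_Icc hat) le_rfl
  have hcaputo : ∀ α, caputoDeriv a α f t
      = riemannLiouvilleIntegral a (1 - α) (derivWithin f (Icc a t)) t := by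
    intro α
    rw [caputoDeriv_eq_riemannLiouvilleIntegral, riemannLiouvilleIntegral,
      riemannLiouvilleIntegral, intervalIntegral.integral_congr_ae]
    filter_upwards [Measure.ae_ne volume t] with s hst hs
    rw [uIoc_of_le hat.le] at hs
    rw [derivWithin_of_mem_nhds (Icc_mem_nhds hs.1 (lt_of_le_of_ne hs.2 hst))]
  simp only [hcaputo]
  exact (tendsto_riemannLiouvilleIntegral_nhdsGT_zero hat hcont).comp tendsto_one_sub_nhdsLT_one

theorem antitoneOn_of_caputo_nonpos_general (a b : ℝ) (f : ℝ → ℝ)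
    (hf : ContDiffOn ℝ 1 f (Set.Icc a b))
    (α₀ : ℝ) (hα₀ : α₀ ∈ Set.Ioo (0 : ℝ) 1)
    (h : ∀ t ∈ Set.Icc a b, ∀ α ∈ Set.Ioo α₀ 1, caputoDeriv a α f t ≤ 0) :
    AntitoneOn f (Set.Icc a b) := by
  have hdiff : ∀ t ∈ Ioo a b, DifferentiableAt ℝ f t := fun t ht =>
    (hf.differentiableOn one_ne_zero t (Ioo_subset_Icc_self ht)).differentiableAt
      (Icc_mem_nhds ht.1 ht.2)
  refine antitoneOn_of_deriv_nonpos (convex_Icc a b) hf.continuousOn ?_ ?_ <;> rw [interior_Icc]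
  · exact fun t ht => (hdiff t ht).differentiableWithinAt
  intro t ht
  have hlim := tendsto_caputoDeriv_nhdsLT_one ht.1 (hf.mono (Icc_subset_Icc_right ht.2.le))
  rw [(hdiff t ht).derivWithin (uniqueDiffOn_Icc ht.1 t (right_mem_Icc.2 ht.1.le))] at hlim
  exact le_of_tendsto hlim (eventually_of_mem (Ioo_mem_nhdsLT hα₀.2)
    fun α hα => h t (Ioo_subset_Icc_self ht) α hα)

theorem antitoneOn_of_caputo_nonpos (a b : ℝ) (hab : a < b) (f : ℝ → ℝ)
    (hf : ContDiffOn ℝ 1 f (Set.Icc a b))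
    (α₀ : ℝ) (hα₀ : α₀ ∈ Set.Ioo (0 : ℝ) 1)
    (h : ∀ t ∈ Set.Icc a b, ∀ α ∈ Set.Ioo α₀ 1, caputoDeriv a α f t ≤ 0) :
    AntitoneOn f (Set.Icc a b) :=
  antitoneOn_of_caputo_nonpos_general a b f hf α₀ hα₀ h
end

section
/- Let a < b be real numbers, let f : ℝ → ℝ be continuously differentiable on [a,b], and let α₀ ∈ (0,1). If D^α_{*a} f(t) ≥ 0 for all t ∈ [a,b] and all α ∈ (α₀, 1), then in fact D^α_{*a} f(t) ≥ 0 for all t ∈ [a,b] and all α ∈ (0, 1). -/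
open Set Filter Topology MeasureTheory intervalIntegral Real

lemma intervalIntegrable_sub_rpow_neg {α : ℝ} (hα : α < 1) (x y d : ℝ) :
    IntervalIntegrable (fun s : ℝ => (d - s) ^ (-α)) volume x y := by
  simpa using
    (intervalIntegrable_rpow' (a := d - x) (b := d - y) (r := -α) (by linarith)).comp_sub_left d

lemma integral_sub_rpow_neg {α : ℝ} (hα : α < 1) (c d : ℝ) :
    ∫ s in c..d, (d - s) ^ (-α) = (d - c) ^ (1 - α) / (1 - α) := by
  rw [integral_comp_sub_left (fun u : ℝ => u ^ (-α)) d, sub_self,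
    integral_rpow (Or.inl (by linarith)), zero_rpow (by linarith)]
  ring_nf

lemma integral_sub_rpow_neg_mul_neg {a c d α M ε : ℝ} {g : ℝ → ℝ} (hac : a ≤ c) (hcd : c < d)
    (hα₀ : 0 ≤ α) (hα : α < 1) (hg : ContinuousOn g (Icc a d))
    (hM₀ : 0 ≤ M) (hM : ∀ s ∈ Icc a c, g s ≤ M) (hε : ∀ s ∈ Icc c d, g s ≤ -ε)
    (hsmall : M * (c - a) < ε * (d - c) / (1 - α)) :
    ∫ s in a..d, (d - s) ^ (-α) * g s < 0 := by
  have hint : ∀ x y, a ≤ x → x ≤ y → y ≤ d →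
      IntervalIntegrable (fun s => (d - s) ^ (-α) * g s) volume x y := fun x y hx hxy hy =>
    (intervalIntegrable_sub_rpow_neg hα x y d).mul_continuousOn
      (by rw [uIcc_of_le hxy]; exact hg.mono (Icc_subset_Icc hx hy))
  have hdc : 0 < d - c := by linarith
  have hfar : ∫ s in a..c, (d - s) ^ (-α) * g s ≤ (d - c) ^ (-α) * ((c - a) * M) := by
    simpa using integral_mono_on hac (hint a c le_rfl hac hcd.le) intervalIntegrable_const
      fun s hs => calc
        (d - s) ^ (-α) * g s ≤ (d - s) ^ (-α) * M :=
          mul_le_mul_of_nonneg_left (hM s hs) (rpow_nonneg (by linarith [hs.2]) _)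
        _ ≤ (d - c) ^ (-α) * M :=
          mul_le_mul_of_nonneg_right
            (rpow_le_rpow_of_nonpos hdc (by linarith [hs.2]) (by linarith)) hM₀
  have hnear : ∫ s in c..d, (d - s) ^ (-α) * g s ≤ (∫ s in c..d, (d - s) ^ (-α)) * -ε := by
    rw [← intervalIntegral.integral_mul_const]
    exact integral_mono_on hcd.le (hint c d hac hcd.le le_rfl)
      ((intervalIntegrable_sub_rpow_neg hα c d d).mul_const _) fun s hs =>
        mul_le_mul_of_nonneg_left (hε s hs) (rpow_nonneg (by linarith [hs.2]) _)
  have hpow : (d - c) ^ (1 - α) = (d - c) ^ (-α) * (d - c) := by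
    rw [show 1 - α = -α + 1 by ring, rpow_add_one hdc.ne']
  rw [integral_sub_rpow_neg hα, hpow] at hnear
  rw [← integral_add_adjacent_intervals (hint a c le_rfl hac hcd.le) (hint c d hac hcd.le le_rfl)]
  calc _ ≤ (d - c) ^ (-α) * ((c - a) * M) + (d - c) ^ (-α) * (d - c) / (1 - α) * -ε :=
        add_le_add hfar hnear
    _ = (d - c) ^ (-α) * (M * (c - a) - ε * (d - c) / (1 - α)) := by ring
    _ < 0 := mul_neg_of_pos_of_neg (rpow_pos_of_pos hdc _) (by linarith)

lemma exists_mem_Ioo_lt_div_one_sub {α₀ : ℝ} (hα₀ : α₀ < 1) (A : ℝ) {B : ℝ} (hB : 0 < B) :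
    ∃ α ∈ Ioo α₀ 1, A < B / (1 - α) := by
  have hsub : Tendsto (fun α : ℝ => 1 - α) (𝓝[<] 1) (𝓝[>] 0) :=
    tendsto_nhdsWithin_iff.2
      ⟨by simpa using ((continuous_sub_left (1 : ℝ)).tendsto 1).mono_left nhdsWithin_le_nhds,
        eventually_nhdsWithin_of_forall fun α hα => mem_Ioi.2 (sub_pos.2 hα)⟩
  have hdiv : Tendsto (fun α : ℝ => B / (1 - α)) (𝓝[<] 1) atTop := by
    simpa only [div_eq_mul_inv, Function.comp_def] using
      (tendsto_inv_nhdsGT_zero.comp hsub).const_mul_atTop hB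
  obtain ⟨α, hA, hα⟩ := ((hdiv.eventually_gt_atTop A).and (Ioo_mem_nhdsLT hα₀)).exists
  exact ⟨α, hα, hA⟩

lemma exists_Icc_forall_le_of_continuousOn_of_lt {a d r : ℝ} {g : ℝ → ℝ} (had : a < d)
    (hg : ContinuousOn g (Icc a d)) (hr : g d < r) :
    ∃ c, a ≤ c ∧ c < d ∧ ∀ s ∈ Icc c d, g s ≤ r := by
  have hev : ∀ᶠ s in 𝓝[≤] d, g s < r := by
    rw [← nhdsWithin_Icc_eq_nhdsLE had]
    exact hg.continuousWithinAt (right_mem_Icc.2 had.le) |>.eventually_lt_const hr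
  obtain ⟨l, hld, hl⟩ := mem_nhdsLE_iff_exists_Icc_subset.1 hev
  exact ⟨max l a, le_max_right _ _, max_lt hld had,
    fun s hs => (hl (Icc_subset_Icc_left (le_max_left _ _) hs)).le⟩

theorem nonneg_of_forall_integral_sub_rpow_neg_mul_nonneg {a b α₀ : ℝ} {g : ℝ → ℝ}
    (hα₀ : α₀ < 1) (hg : ContinuousOn g (Icc a b))
    (h : ∀ t ∈ Icc a b, ∀ α ∈ Ioo α₀ 1, 0 ≤ ∫ s in a..t, (t - s) ^ (-α) * g s) :
    ∀ d ∈ Ioc a b, 0 ≤ g d := by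
  intro d hd
  by_contra! hneg
  have hgd : ContinuousOn g (Icc a d) := hg.mono (Icc_subset_Icc_right hd.2)
  obtain ⟨c, hac, hcd, hc⟩ := exists_Icc_forall_le_of_continuousOn_of_lt hd.1 hgd
    (by linarith : g d < g d / 2)
  obtain ⟨M, hM⟩ := isCompact_Icc.exists_bound_of_continuousOn hgd
  have hM₀ : 0 ≤ M := (norm_nonneg _).trans (hM d (right_mem_Icc.2 hd.1.le))
  obtain ⟨α, hα, hsmall⟩ := exists_mem_Ioo_lt_div_one_sub (max_lt hα₀ one_pos) (M * (c - a))
    (mul_pos (by linarith : 0 < -(g d / 2)) (sub_pos.2 hcd))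
  have hneg_int := integral_sub_rpow_neg_mul_neg hac hcd (le_max_right _ _ |>.trans hα.1.le) hα.2
    hgd hM₀ (fun s hs => (le_abs_self _).trans (hM s (Icc_subset_Icc_right hcd.le hs)))
    (by simpa using hc) hsmall
  exact hneg_int.not_ge (h d (Ioc_subset_Icc_self hd) α ⟨(le_max_left _ _).trans_lt hα.1, hα.2⟩)

lemma caputoDeriv_nonneg_iff {a α t : ℝ} (hα : α < 1) (f : ℝ → ℝ) :
    0 ≤ caputoDeriv a α f t ↔ 0 ≤ ∫ s in a..t, (t - s) ^ (-α) * deriv f s := by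
  rw [caputoDeriv, mul_nonneg_iff_of_pos_left (inv_pos.2 (Gamma_pos_of_pos (by linarith)))]

lemma integral_mul_deriv_eq_integral_mul_derivWithin {a b t : ℝ} (ht : t ∈ Icc a b)
    (w f : ℝ → ℝ) :
    ∫ s in a..t, w s * deriv f s = ∫ s in a..t, w s * derivWithin f (Icc a b) s := by
  rw [integral_of_le ht.1, integral_of_le ht.1, integral_Ioc_eq_integral_Ioo,
    integral_Ioc_eq_integral_Ioo]
  refine setIntegral_congr_fun measurableSet_Ioo fun s hs => ?_
  rw [derivWithin_of_mem_nhds (Icc_mem_nhds hs.1 (hs.2.trans_le ht.2))]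

theorem caputo_nonneg_extend (a b : ℝ) (hab : a < b) (f : ℝ → ℝ)
    (hf : ContDiffOn ℝ 1 f (Set.Icc a b))
    (α₀ : ℝ) (hα₀ : α₀ ∈ Set.Ioo (0 : ℝ) 1)
    (h : ∀ t ∈ Set.Icc a b, ∀ α ∈ Set.Ioo α₀ 1, 0 ≤ caputoDeriv a α f t) :
    ∀ t ∈ Set.Icc a b, ∀ α ∈ Set.Ioo (0 : ℝ) 1, 0 ≤ caputoDeriv a α f t := by
  -- `deriv f` is unconstrained at `a` and `b`; `derivWithin` is continuous on `[a, b]`.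
  set g := derivWithin f (Icc a b)
  have hcaputo : ∀ t ∈ Icc a b, ∀ α < 1,
      0 ≤ caputoDeriv a α f t ↔ 0 ≤ ∫ s in a..t, (t - s) ^ (-α) * g s := fun t ht α hα => by
    rw [caputoDeriv_nonneg_iff hα, integral_mul_deriv_eq_integral_mul_derivWithin ht]
  have hg_nonneg : ∀ s ∈ Ioc a b, 0 ≤ g s :=
    nonneg_of_forall_integral_sub_rpow_neg_mul_nonneg hα₀.2
      (hf.continuousOn_derivWithin (uniqueDiffOn_Icc hab) le_rfl)
      fun t ht α hα => (hcaputo t ht α hα.2).1 (h t ht α hα)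
  intro t ht α hα
  rw [hcaputo t ht α hα.2, integral_of_le ht.1]
  exact setIntegral_nonneg measurableSet_Ioc fun s hs =>
    mul_nonneg (rpow_nonneg (by linarith [hs.2]) _) (hg_nonneg s ⟨hs.1, hs.2.trans ht.2⟩)
end

section
/- There exist real numbers 0 = a < b, a function f : ℝ → ℝ that is continuously differentiable (namely a cubic polynomial), and α* ∈ (0,1), such that D^α_{*a} f(t) ≥ 0 for all t ∈ [a,b] and all α ∈ (0, α*], but f is not monotone on [a,b]. Hence a constant sign of the Caputo derivatives for all orders α in a subinterval (0, α*] of (0,1) does not imply monotonicity. -/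
open Real intervalIntegral

theorem integral_sub_rpow {r : ℝ} (hr : -1 < r) (t : ℝ) :
    ∫ s in (0 : ℝ)..t, (t - s) ^ r = t ^ (r + 1) / (r + 1) := by
  rw [integral_comp_sub_left (· ^ r) t, sub_self, sub_zero, integral_rpow (.inl hr),
    zero_rpow (by linarith), sub_zero]

theorem intervalIntegrable_sub_rpow {r : ℝ} (hr : -1 < r) (t a b : ℝ) :
    IntervalIntegrable (fun s => (t - s) ^ r) MeasureTheory.volume a b := by
  simpa using (intervalIntegrable_rpow' hr (a := t - a) (b := t - b)).comp_sub_left t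

theorem integral_sub_rpow_neg_mul_quadratic (A B C : ℝ) {α t : ℝ} (hα : α < 1) (ht : 0 ≤ t) :
    ∫ s in (0 : ℝ)..t, (t - s) ^ (-α) * (A * s ^ 2 + B * s + C) =
      t ^ (1 - α) * (2 * A * t ^ 2 + (3 - α) * B * t + (2 - α) * (3 - α) * C) /
        ((1 - α) * (2 - α) * (3 - α)) := by
  -- Taylor expansion of the quadratic around `s = t`
  have hexpand : Set.EqOn (fun s => (t - s) ^ (-α) * (A * s ^ 2 + B * s + C))
      (fun s => A * (t - s) ^ (2 - α) - (2 * A * t + B) * (t - s) ^ (1 - α)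
        + (A * t ^ 2 + B * t + C) * (t - s) ^ (-α)) (Set.uIcc 0 t) := by
    intro s hs
    rw [Set.uIcc_of_le ht] at hs
    have hts : 0 ≤ t - s := sub_nonneg.2 hs.2
    have h2 : (t - s) ^ (2 - α) = (t - s) ^ (2 : ℕ) * (t - s) ^ (-α) := by
      rw [← rpow_natCast, ← rpow_add' hts (by push_cast; linarith)]; push_cast; ring_nf
    have h1 : (t - s) ^ (1 - α) = (t - s) * (t - s) ^ (-α) := by
      rw [show (1 : ℝ) - α = 1 + -α by ring, rpow_one_add' hts (by linarith)]
    simp only [h2, h1]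
    ring
  have I2 := intervalIntegrable_sub_rpow (r := 2 - α) (by linarith) t 0 t
  have I1 := intervalIntegrable_sub_rpow (r := 1 - α) (by linarith) t 0 t
  have I0 := intervalIntegrable_sub_rpow (r := -α) (by linarith) t 0 t
  rw [integral_congr hexpand, integral_add ((I2.const_mul _).sub (I1.const_mul _))
    (I0.const_mul _), integral_sub (I2.const_mul _) (I1.const_mul _), integral_const_mul,
    integral_const_mul, integral_const_mul, integral_sub_rpow (by linarith),
    integral_sub_rpow (by linarith), integral_sub_rpow (by linarith)]
  have h3 : t ^ (2 - α + 1) = t ^ (1 - α) * t ^ 2 := by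
    rw [← rpow_natCast, ← rpow_add' ht (by push_cast; linarith)]; push_cast; ring_nf
  have h2 : t ^ (1 - α + 1) = t ^ (1 - α) * t := by
    rw [rpow_add' ht (by linarith), rpow_one]
  have hα1 : 1 - α ≠ 0 := by linarith
  have hα2 : 2 - α ≠ 0 := by linarith
  have hα3 : 3 - α ≠ 0 := by linarith
  rw [h3, h2, show 2 - α + 1 = 3 - α by ring, show 1 - α + 1 = 2 - α by ring,
    show -α + 1 = 1 - α by ring]
  field_simp
  ring

theorem Real.Gamma_four_sub {α : ℝ} (hα : α < 1) :
    Gamma (4 - α) = (1 - α) * (2 - α) * (3 - α) * Gamma (1 - α) := by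
  rw [show 4 - α = (3 - α) + 1 by ring, Gamma_add_one (by linarith),
    show 3 - α = (2 - α) + 1 by ring, Gamma_add_one (by linarith),
    show 2 - α = (1 - α) + 1 by ring, Gamma_add_one (by linarith)]
  ring

theorem deriv_cubic (c₀ c₁ c₂ c₃ s : ℝ) :
    deriv (fun t => c₃ * t ^ 3 + c₂ * t ^ 2 + c₁ * t + c₀) s =
      3 * c₃ * s ^ 2 + 2 * c₂ * s + c₁ := by
  have h := ((((hasDerivAt_pow 3 s).const_mul c₃).add ((hasDerivAt_pow 2 s).const_mul c₂)).add
    ((hasDerivAt_id s).const_mul c₁)).add_const c₀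
  convert h.deriv using 1
  norm_num
  ring

theorem caputoDeriv_cubic (c₀ c₁ c₂ c₃ : ℝ) {α t : ℝ} (hα : α < 1) (ht : 0 ≤ t) :
    caputoDeriv 0 α (fun t => c₃ * t ^ 3 + c₂ * t ^ 2 + c₁ * t + c₀) t =
      t ^ (1 - α) * (6 * c₃ * t ^ 2 + 2 * (3 - α) * c₂ * t + (2 - α) * (3 - α) * c₁) /
        Gamma (4 - α) := by
  rw [caputoDeriv]
  simp only [deriv_cubic]
  rw [integral_sub_rpow_neg_mul_quadratic _ _ _ hα ht, Gamma_four_sub hα]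
  field_simp
  ring

theorem not_monotoneOn_or_antitoneOn_of_lt_of_gt {α β : Type*} [Preorder α] [Preorder β]
    {f : α → β} {s : Set α} {x y z : α} (hx : x ∈ s) (hy : y ∈ s) (hz : z ∈ s)
    (hxy : x ≤ y) (hyz : y ≤ z) (hfxy : f x < f y) (hfzy : f z < f y) :
    ¬ (MonotoneOn f s ∨ AntitoneOn f s) := by
  rintro (hmono | hanti)
  · exact (hmono hy hz hyz).not_gt hfzy
  · exact (hanti hx hy hxy).not_gt hfxy

theorem exists_caputo_nonneg_not_monotone :
    ∃ (b : ℝ) (f : ℝ → ℝ) (αstar : ℝ),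
      0 < b ∧ ContDiff ℝ 1 f ∧
      (∃ c₀ c₁ c₂ c₃ : ℝ, c₃ ≠ 0 ∧
        ∀ t, f t = c₃ * t ^ 3 + c₂ * t ^ 2 + c₁ * t + c₀) ∧
      αstar ∈ Set.Ioo (0 : ℝ) 1 ∧
      (∀ t ∈ Set.Icc (0 : ℝ) b, ∀ α ∈ Set.Ioc (0 : ℝ) αstar,
        0 ≤ caputoDeriv 0 α f t) ∧
      ¬ (MonotoneOn f (Set.Icc (0 : ℝ) b) ∨ AntitoneOn f (Set.Icc (0 : ℝ) b)) := by
  set f : ℝ → ℝ := fun t => 1 * t ^ 3 + (-3 / 2) * t ^ 2 + 3 / 5 * t + 0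
  refine ⟨1, f, 1 / 3, one_pos, by fun_prop, ⟨0, 3 / 5, -3 / 2, 1, one_ne_zero, fun t => rfl⟩,
    ⟨by norm_num, by norm_num⟩, ?_, ?_⟩
  · rintro t ⟨ht, -⟩ α ⟨-, hα⟩
    rw [caputoDeriv_cubic _ _ _ _ (by linarith) ht]
    have hquad : 0 ≤ 6 * 1 * t ^ 2 + 2 * (3 - α) * (-3 / 2) * t + (2 - α) * (3 - α) * (3 / 5) := by
      nlinarith [sq_nonneg (4 * t - (3 - α)), mul_nonneg (by linarith : (0 : ℝ) ≤ 3 - α)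
        (by linarith : (0 : ℝ) ≤ 1 - 3 * α)]
    exact div_nonneg (mul_nonneg (rpow_nonneg ht _) hquad) (Gamma_pos_of_pos (by linarith)).le
  · exact not_monotoneOn_or_antitoneOn_of_lt_of_gt (x := 0) (y := 1 / 2) (z := 3 / 5)
      (by norm_num) (by norm_num) (by norm_num) (by norm_num) (by norm_num) (by norm_num [f])
      (by norm_num [f])
end
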